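/- For any finite digraph g, for every pair of indices i ≠ j and every k ≥ 1, the entry (T^k)_{ij} of the k-th right power of the adjacency set matrix T is a subset of V not containing v_i, unless it equals V; that is, either (T^k)_{ij} = V or v_i ∉ (T^k)_{ij}. -/

import Mathlib

open Set

/-- Adjacency set matrix `T`: `T i j = {v_j}` if `(v_i,v_j)` is an arc and `i ≠ j`,
and `T i j = V` (the universal set) otherwise. -/
def Tmat (n : ℕ) (A : Fin n → Fin n → Prop) (i j : Fin n) : Set (Fin n) :=
  {x | (A i j ∧ i ≠ j) → x = j}

/-- Right powers of `T`: `Tpow n A k` is the `(k+1)`-st right power `T^(k+1)`. -/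
def Tpow (n : ℕ) (A : Fin n → Fin n → Prop) : ℕ → Fin n → Fin n → Set (Fin n)
  | 0 => Tmat n A
  | k + 1 => fun i j => {x | i ≠ j → x ∈ ⋂ μ, Tpow n A k i μ ∪ Tmat n A μ j}

/-- Start-vertex adjacency set matrix `R`. -/
def Rmat (n : ℕ) (A : Fin n → Fin n → Prop) (i j : Fin n) : Set (Fin n) :=
  {x | (A i j ∧ i ≠ j) → x = i}

/-- A `k`-path from `i` to `j`: `k+1` pairwise distinct vertices from `i` to `j`
following arcs of the digraph. -/
def IsPath (n : ℕ) (A : Fin n → Fin n → Prop) (k : ℕ) (i j : Fin n) : Prop :=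
  ∃ w : Fin (k + 1) → Fin n, w 0 = i ∧ w (Fin.last k) = j ∧ Function.Injective w ∧
    ∀ x : Fin k, A (w x.castSucc) (w x.succ)

/-- A `k`-cycle through `i`: a closed arc-walk of length `k` at `i` whose first `k`
vertices are pairwise distinct. -/
def IsCycle (n : ℕ) (A : Fin n → Fin n → Prop) (k : ℕ) (i : Fin n) : Prop :=
  ∃ w : Fin (k + 1) → Fin n, w 0 = i ∧ w (Fin.last k) = i ∧
    Function.Injective (fun x : Fin k => w x.castSucc) ∧
    ∀ x : Fin k, A (w x.castSucc) (w x.succ)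


/-
Induction on the power: if `v_i ∈ (T^{k+1})_{ij}` then for every `μ` either `v_i ∈ (T^k)_{iμ}`, which
is then all of `V` by induction, or `v_i ∈ T_{μj}`; as a non-`V` entry of `T` is `{v_j}` and
`v_i ≠ v_j`, the latter forces `T_{μj} = V`. Either way every union in the intersection is `V`.
-/

theorem Tmat_eq_univ_or_eq_singleton (n : ℕ) (A : Fin n → Fin n → Prop) (i j : Fin n) :
    Tmat n A i j = univ ∨ Tmat n A i j = {j} := by
  by_cases h : A i j ∧ i ≠ j
  · exact .inr (by ext x; simp [Tmat, h])
  · exact .inl (by ext x; simp [Tmat, h])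

theorem Tmat_eq_univ_of_mem {n : ℕ} {A : Fin n → Fin n → Prop} {i j x : Fin n}
    (hx : x ∈ Tmat n A i j) (hxj : x ≠ j) : Tmat n A i j = univ :=
  (Tmat_eq_univ_or_eq_singleton n A i j).resolve_right fun h => hxj (by rwa [h] at hx)

theorem Tmat_self (n : ℕ) (A : Fin n → Fin n → Prop) (i : Fin n) : Tmat n A i i = univ := by
  ext x; simp [Tmat]

theorem mem_Tpow_succ {n : ℕ} {A : Fin n → Fin n → Prop} {m : ℕ} {i j x : Fin n} :
    x ∈ Tpow n A (m + 1) i j ↔ (i ≠ j → ∀ μ, x ∈ Tpow n A m i μ ∪ Tmat n A μ j) := by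
  simp only [Tpow, mem_ofPred_eq, mem_iInter]

theorem Tpow_eq_univ_of_mem_self (n : ℕ) (A : Fin n → Fin n → Prop) (m : ℕ) (i j : Fin n)
    (hi : i ∈ Tpow n A m i j) : Tpow n A m i j = univ := by
  induction m generalizing j with
  | zero =>
    obtain rfl | hij := eq_or_ne i j
    · exact Tmat_self n A i
    · exact Tmat_eq_univ_of_mem hi hij
  | succ m ih =>
    refine eq_univ_of_forall fun x => mem_Tpow_succ.2 fun hij μ => ?_
    rcases mem_Tpow_succ.1 hi hij μ with hiμ | hμj
    · exact .inl (ih μ hiμ ▸ mem_univ x)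
    · exact .inr (Tmat_eq_univ_of_mem hμj hij ▸ mem_univ x)

theorem Tpow_eq_univ_or_not_mem_general (n : ℕ) (A : Fin n → Fin n → Prop) (k : ℕ)
    (i j : Fin n) :
    Tpow n A (k - 1) i j = Set.univ ∨ i ∉ Tpow n A (k - 1) i j :=
  or_iff_not_imp_right.2 fun hi => Tpow_eq_univ_of_mem_self n A (k - 1) i j (not_not.1 hi)

/-- For every `k ≥ 1` and `i ≠ j`, either `(T^k)_{ij} = V` or `v_i ∉ (T^k)_{ij}`. -/
theorem Tpow_eq_univ_or_not_mem (n : ℕ) (A : Fin n → Fin n → Prop) (k : ℕ)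
    (hk : 1 ≤ k) (i j : Fin n) (hij : i ≠ j) :
    Tpow n A (k - 1) i j = Set.univ ∨ i ∉ Tpow n A (k - 1) i j :=
  Tpow_eq_univ_or_not_mem_general n A k i j
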